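/- Let b > 1 and u ∈ (0,1). Then lim_{β → 0⁺} β(1-u)·∫₀^∞ e^{-β v(α)}/d₁(α) dα = ((1-u)/π)·∫₀^π (1/d₁(α)) dα. -/

import Mathlib

open MeasureTheory Filter Real

/-- `d₀(θ) = -b·sin²θ - (1/b)·cos²θ`. -/
noncomputable def d0 (b θ : ℝ) : ℝ := -b * Real.sin θ ^ 2 - (1 / b) * Real.cos θ ^ 2

/-- `d₁(θ) = -(1/b)·sin²θ - b·cos²θ`. -/
noncomputable def d1 (b θ : ℝ) : ℝ := -(1 / b) * Real.sin θ ^ 2 - b * Real.cos θ ^ 2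

/-- `v` is the antiderivative vanishing at `0` of `θ ↦ -(u/d₀(θ) + (1-u)/d₁(θ))`. -/
noncomputable def v (b u θ : ℝ) : ℝ :=
  ∫ α in (0:ℝ)..θ, -(u / d0 b α + (1 - u) / d1 b α)

noncomputable def Aa (t θ : ℝ) : ℝ :=
  θ + Real.arctan ((t - 1) * Real.sin θ * Real.cos θ / (Real.cos θ ^ 2 + t * Real.sin θ ^ 2))

lemma denom_pos {t : ℝ} (ht : 0 < t) (θ : ℝ) : 0 < Real.cos θ ^ 2 + t * Real.sin θ ^ 2 := by
  have h := Real.sin_sq_add_cos_sq θ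
  rcases le_total t 1 with h1 | h1
  · nlinarith [sq_nonneg (Real.sin θ), sq_nonneg (Real.cos θ)]
  · nlinarith [sq_nonneg (Real.sin θ), sq_nonneg (Real.cos θ)]

lemma hasDerivAt_Aa {t : ℝ} (ht : 0 < t) (θ : ℝ) :
    HasDerivAt (fun x => Aa t x) (t / (Real.cos θ ^ 2 + t ^ 2 * Real.sin θ ^ 2)) θ := by
  have hD : 0 < Real.cos θ ^ 2 + t * Real.sin θ ^ 2 := denom_pos ht θ
  have hden2 : 0 < Real.cos θ ^ 2 + t ^ 2 * Real.sin θ ^ 2 := by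
    have := denom_pos (t := t ^ 2) (by positivity) θ
    simpa using this
  have hN : HasDerivAt (fun x => (t - 1) * Real.sin x * Real.cos x)
      ((t - 1) * (Real.cos θ ^ 2 - Real.sin θ ^ 2)) θ := by
    have := ((Real.hasDerivAt_sin θ).const_mul (t - 1)).mul (Real.hasDerivAt_cos θ)
    refine this.congr_deriv ?_
    ring
  have hDD : HasDerivAt (fun x => Real.cos x ^ 2 + t * Real.sin x ^ 2)
      (2 * (t - 1) * (Real.sin θ * Real.cos θ)) θ := by
    have h1 := (Real.hasDerivAt_cos θ).pow 2
    have h2 := ((Real.hasDerivAt_sin θ).pow 2).const_mul t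
    refine (h1.add h2).congr_deriv ?_
    ring
  have hq : HasDerivAt (fun x => (t - 1) * Real.sin x * Real.cos x /
      (Real.cos x ^ 2 + t * Real.sin x ^ 2))
      (((t - 1) * (Real.cos θ ^ 2 - Real.sin θ ^ 2) * (Real.cos θ ^ 2 + t * Real.sin θ ^ 2)
        - (t - 1) * Real.sin θ * Real.cos θ * (2 * (t - 1) * (Real.sin θ * Real.cos θ)))
        / (Real.cos θ ^ 2 + t * Real.sin θ ^ 2) ^ 2) θ :=
    hN.div hDD hD.ne'
  have harc := (Real.hasDerivAt_arctan ((t - 1) * Real.sin θ * Real.cos θ /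
      (Real.cos θ ^ 2 + t * Real.sin θ ^ 2))).comp θ hq
  have := (hasDerivAt_id θ).add harc
  refine this.congr_deriv ?_
  have hpyth := Real.sin_sq_add_cos_sq θ
  field_simp
  linear_combination (Real.cos θ^4*t + Real.sin θ^2*Real.cos θ^2*t + Real.sin θ^2*Real.cos θ^2*t^3 + Real.sin θ^4*t^3) * hpyth

section facts
variable {b u : ℝ} (hb : 1 < b)

lemma hb0 (hb : 1 < b) : 0 < b := lt_trans one_pos hb

lemma d0_bounds (hb : 1 < b) (θ : ℝ) : 1 / b ≤ -d0 b θ ∧ -d0 b θ ≤ b := by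
  have h := Real.sin_sq_add_cos_sq θ
  have hbp : 0 < b := hb0 hb
  have h1 : 1 / b ≤ b := by
    rw [div_le_iff₀ hbp]; nlinarith
  unfold d0
  constructor
  · nlinarith [sq_nonneg (Real.sin θ), sq_nonneg (Real.cos θ)]
  · nlinarith [sq_nonneg (Real.sin θ), sq_nonneg (Real.cos θ)]

lemma d1_bounds (hb : 1 < b) (θ : ℝ) : 1 / b ≤ -d1 b θ ∧ -d1 b θ ≤ b := by
  have h := Real.sin_sq_add_cos_sq θ
  have hbp : 0 < b := hb0 hb
  have h1 : 1 / b ≤ b := by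
    rw [div_le_iff₀ hbp]; nlinarith
  unfold d1
  constructor
  · nlinarith [sq_nonneg (Real.sin θ), sq_nonneg (Real.cos θ)]
  · nlinarith [sq_nonneg (Real.sin θ), sq_nonneg (Real.cos θ)]

lemma d0_neg (hb : 1 < b) (θ : ℝ) : d0 b θ < 0 := by
  have := (d0_bounds hb θ).1
  have : 0 < 1 / b := by positivity
  linarith [(d0_bounds hb θ).1]

lemma d1_neg (hb : 1 < b) (θ : ℝ) : d1 b θ < 0 := by
  have : 0 < 1 / b := by positivity
  linarith [(d1_bounds hb θ).1]

lemma d0_ne (hb : 1 < b) (θ : ℝ) : d0 b θ ≠ 0 := (d0_neg hb θ).ne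
lemma d1_ne (hb : 1 < b) (θ : ℝ) : d1 b θ ≠ 0 := (d1_neg hb θ).ne

lemma inv_d0 (hb : 1 < b) (θ : ℝ) :
    -(1 / d0 b θ) = b / (Real.cos θ ^ 2 + b ^ 2 * Real.sin θ ^ 2) := by
  have h := denom_pos (t := b ^ 2) (by positivity) θ
  have hd := d0_ne hb θ
  have hbp : 0 < b := hb0 hb
  rw [show -(1 / d0 b θ) = (-1) / d0 b θ by ring, div_eq_div_iff hd h.ne']
  unfold d0
  field_simp
  ring

lemma inv_d1 (hb : 1 < b) (θ : ℝ) :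
    -(1 / d1 b θ) = b⁻¹ / (Real.cos θ ^ 2 + b⁻¹ ^ 2 * Real.sin θ ^ 2) := by
  have hbp : 0 < b := hb0 hb
  have h := denom_pos (t := b⁻¹ ^ 2) (by positivity) θ
  have hd := d1_ne hb θ
  rw [show -(1 / d1 b θ) = (-1) / d1 b θ by ring, div_eq_div_iff hd h.ne']
  unfold d1
  field_simp
  ring

/-- the integrand defining `v` -/
lemma hasDerivAt_V (hb : 1 < b) (u θ : ℝ) :
    HasDerivAt (fun x => u * Aa b x + (1 - u) * Aa b⁻¹ x)
      (-(u / d0 b θ + (1 - u) / d1 b θ)) θ := by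
  have hbp : 0 < b := hb0 hb
  have h1 := (hasDerivAt_Aa hbp θ).const_mul u
  have h2 := (hasDerivAt_Aa (t := b⁻¹) (by positivity) θ).const_mul (1 - u)
  have := h1.add h2
  refine this.congr_deriv ?_
  have e0 := inv_d0 hb θ
  have e1 := inv_d1 hb θ
  rw [← e0, ← e1]
  ring

lemma cont_g (hb : 1 < b) (u : ℝ) :
    Continuous (fun θ => -(u / d0 b θ + (1 - u) / d1 b θ)) := by
  apply Continuous.neg
  apply Continuous.add
  · exact continuous_const.div (by unfold d0; fun_prop) (fun θ => d0_ne hb θ)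
  · exact continuous_const.div (by unfold d1; fun_prop) (fun θ => d1_ne hb θ)

lemma v_eq (hb : 1 < b) (u θ : ℝ) :
    v b u θ = u * Aa b θ + (1 - u) * Aa b⁻¹ θ := by
  have h := intervalIntegral.integral_eq_sub_of_hasDerivAt
    (f := fun x => u * Aa b x + (1 - u) * Aa b⁻¹ x)
    (f' := fun x => -(u / d0 b x + (1 - u) / d1 b x))
    (fun x _ => hasDerivAt_V hb u x)
    ((cont_g hb u).intervalIntegrable 0 θ)
  unfold v
  rw [h]
  have : Aa b 0 = 0 := by simp [Aa]
  have h2 : Aa b⁻¹ 0 = 0 := by simp [Aa]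
  simp only [this, h2]
  ring

lemma cont_v (hb : 1 < b) (u : ℝ) : Continuous (fun θ => v b u θ) := by
  have : (fun θ => v b u θ) = fun θ => u * Aa b θ + (1 - u) * Aa b⁻¹ θ := by
    funext θ; exact v_eq hb u θ
  rw [this]
  unfold Aa
  have c1 : ∀ t : ℝ, 0 < t → Continuous (fun θ : ℝ =>
      θ + Real.arctan ((t - 1) * Real.sin θ * Real.cos θ / (Real.cos θ ^ 2 + t * Real.sin θ ^ 2))) := by
    intro t ht
    apply continuous_id.add
    apply Real.continuous_arctan.comp
    exact (by fun_prop : Continuous fun θ : ℝ => (t - 1) * Real.sin θ * Real.cos θ).div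
      (by fun_prop) (fun θ => (denom_pos ht θ).ne')
  exact (continuous_const.mul (c1 b (hb0 hb))).add (continuous_const.mul (c1 b⁻¹ (by positivity)))

lemma Aa_add_pi {t : ℝ} (θ : ℝ) : Aa t (θ + π) = Aa t θ + π := by
  unfold Aa
  rw [Real.sin_add_pi, Real.cos_add_pi]
  ring_nf

lemma v_add_pi (hb : 1 < b) (u θ : ℝ) : v b u (θ + π) = v b u θ + π := by
  rw [v_eq hb, v_eq hb, Aa_add_pi, Aa_add_pi]
  ring

lemma v_pi (hb : 1 < b) (u : ℝ) : v b u π = π := by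
  rw [v_eq hb]
  unfold Aa
  simp [Real.sin_pi]
  ring

lemma v_add_nat_pi (hb : 1 < b) (u θ : ℝ) (n : ℕ) : v b u (θ + n * π) = v b u θ + n * π := by
  induction n with
  | zero => simp
  | succ k ih =>
    have : θ + (k + 1 : ℕ) * π = (θ + k * π) + π := by push_cast; ring
    rw [this, v_add_pi hb, ih]
    push_cast; ring

lemma g_lb (hb : 1 < b) (hu : u ∈ Set.Ioo (0:ℝ) 1) (θ : ℝ) :
    1 / b ≤ -(u / d0 b θ + (1 - u) / d1 b θ) := by
  obtain ⟨hu0, hu1⟩ := hu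
  have hbp : 0 < b := hb0 hb
  have h0 := d0_bounds hb θ
  have h1 := d1_bounds hb θ
  have hd0 := d0_neg hb θ
  have hd1 := d1_neg hb θ
  have hp0 : 0 < -d0 b θ := lt_of_lt_of_le (by positivity) h0.1
  have hp1 : 0 < -d1 b θ := lt_of_lt_of_le (by positivity) h1.1
  have key : -(u / d0 b θ + (1 - u) / d1 b θ) = u / (-d0 b θ) + (1 - u) / (-d1 b θ) := by
    rw [div_neg, div_neg]; ring
  have l0 : u / b ≤ u / (-d0 b θ) := by
    rw [div_le_div_iff₀ hbp hp0]; nlinarith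
  have l1 : (1 - u) / b ≤ (1 - u) / (-d1 b θ) := by
    rw [div_le_div_iff₀ hbp hp1]; nlinarith
  have hsum : u / b + (1 - u) / b = 1 / b := by ring
  linarith [key.ge]

lemma v_lb (hb : 1 < b) (hu : u ∈ Set.Ioo (0:ℝ) 1) {θ : ℝ} (hθ : 0 ≤ θ) :
    θ / b ≤ v b u θ := by
  have hmono := intervalIntegral.integral_mono_on (μ := volume) (a := 0) (b := θ) hθ
    (intervalIntegrable_const (c := 1 / b))
    ((cont_g hb u).intervalIntegrable 0 θ)
    (fun x _ => g_lb hb hu x)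
  have : ∫ _x in (0:ℝ)..θ, (1 / b : ℝ) = θ * (1 / b) := by
    rw [intervalIntegral.integral_const]; simp
  unfold v
  calc θ / b = θ * (1 / b) := by ring
    _ = ∫ _x in (0:ℝ)..θ, (1 / b : ℝ) := this.symm
    _ ≤ _ := hmono

lemma d1_add_nat_pi (b x : ℝ) (n : ℕ) : d1 b (x + n * π) = d1 b x := by
  have hsq : ((-1:ℝ) ^ n) ^ 2 = 1 := by
    rw [← pow_mul, mul_comm, pow_mul]; norm_num
  unfold d1
  rw [Real.sin_add_nat_mul_pi, Real.cos_add_nat_mul_pi, mul_pow, mul_pow, hsq]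
  ring

end facts


/-- `β(1-u)·∫₀^∞ e^{-βv(α)}/d₁(α) dα → ((1-u)/π)·∫₀^π 1/d₁(α) dα` as `β → 0⁺`. -/
theorem limit_beta_to_zero (b u : ℝ) (hb : 1 < b) (hu : u ∈ Set.Ioo (0:ℝ) 1) :
    Tendsto
      (fun β => β * (1 - u) * ∫ α in Set.Ioi (0:ℝ), Real.exp (-(β * v b u α)) / d1 b α)
      (nhdsWithin 0 (Set.Ioi 0))
      (nhds ((1 - u) / π * ∫ α in (0:ℝ)..π, 1 / d1 b α)) := by
  have hbp : 0 < b := hb0 hb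
  set f : ℝ → ℝ → ℝ := fun β α => Real.exp (-(β * v b u α)) / d1 b α with hf
  have cont_f : ∀ β, Continuous (f β) := by
    intro β
    exact (Real.continuous_exp.comp ((continuous_const.mul (cont_v hb u)).neg)).div
      (by unfold d1; fun_prop) (d1_ne hb)
  have habs : ∀ α, |1 / d1 b α| ≤ b := by
    intro α
    have h1 := (d1_bounds hb α).1
    have hd := d1_neg hb α
    have hp : 0 < -d1 b α := lt_of_lt_of_le (by positivity) h1
    rw [abs_div, abs_one, abs_of_neg hd, div_le_iff₀ hp]
    calc (1:ℝ) = b * (1/b) := by field_simp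
      _ ≤ b * -d1 b α := by nlinarith
  have hfe : ∀ β α, ‖f β α‖ = Real.exp (-(β * v b u α)) * |1 / d1 b α| := by
    intro β α
    simp only [hf, Real.norm_eq_abs, div_eq_mul_inv, abs_mul, Real.abs_exp, one_mul]
  have hnorm : ∀ β α, 0 ≤ β → 0 ≤ α → ‖f β α‖ ≤ Real.exp (-(β/b) * α) * b := by
    intro β α hβ hα
    rw [hfe]
    apply mul_le_mul _ (habs α) (abs_nonneg _) (Real.exp_nonneg _)
    rw [Real.exp_le_exp]
    have hv := v_lb hb hu hα
    have : β * (α / b) ≤ β * v b u α := mul_le_mul_of_nonneg_left hv hβ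
    calc -(β * v b u α) ≤ -(β * (α / b)) := by linarith
      _ = -(β/b) * α := by ring
  have hInt : ∀ β, 0 < β → IntegrableOn (f β) (Set.Ioi 0) := by
    intro β hβ
    apply Integrable.mono' ((exp_neg_integrableOn_Ioi 0 (show 0 < β/b by positivity)).mul_const b)
    · exact (cont_f β).aestronglyMeasurable.restrict
    · refine (ae_restrict_iff' measurableSet_Ioi).mpr (ae_of_all _ fun α hα => ?_)
      exact hnorm β α hβ.le (le_of_lt hα)
  set J : ℝ → ℝ := fun β => ∫ α in Set.Ioc (0:ℝ) π, f β α with hJ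
  -- splitting into periods
  have hsplit : ∀ β, 0 < β → (∫ α in Set.Ioi (0:ℝ), f β α) = (1 - Real.exp (-(β*π)))⁻¹ * J β := by
    intro β hβ
    set s : ℕ → Set ℝ := fun n => Set.Ioc ((n:ℝ)*π) (((n:ℝ)+1)*π) with hs
    have hUnion : (⋃ n, s n) = Set.Ioi (0:ℝ) := by
      ext x
      simp only [hs, Set.mem_iUnion, Set.mem_Ioc, Set.mem_Ioi]
      constructor
      · rintro ⟨n, h1, _⟩
        have : (0:ℝ) ≤ (n:ℝ)*π := by positivity
        linarith
      · intro hx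
        have hm : 0 < ⌈x/π⌉₊ := Nat.ceil_pos.mpr (div_pos hx Real.pi_pos)
        refine ⟨⌈x/π⌉₊ - 1, ?_, ?_⟩
        · have h1 : (⌈x/π⌉₊ - 1 : ℕ) < ⌈x/π⌉₊ := Nat.sub_lt hm one_pos
          have h2 : ((⌈x/π⌉₊ - 1 : ℕ) : ℝ) < x / π := Nat.lt_ceil.mp h1
          exact (lt_div_iff₀ Real.pi_pos).mp h2
        · have h2 : x / π ≤ (⌈x/π⌉₊ : ℝ) := Nat.le_ceil _
          have hx2 : x ≤ (⌈x/π⌉₊:ℝ) * π := (div_le_iff₀ Real.pi_pos).mp h2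
          have hcast : ((⌈x/π⌉₊ - 1 : ℕ):ℝ) + 1 = (⌈x/π⌉₊ : ℝ) := by
            rw [Nat.cast_sub hm]; push_cast; ring
          rw [hcast]; exact hx2
    have hdisj : Pairwise (Function.onFun Disjoint s) := by
      have key : ∀ m n : ℕ, m < n → Disjoint (s m) (s n) := by
        intro m n h
        simp only [hs]
        rw [Set.disjoint_left]
        rintro x ⟨_, hx2⟩ ⟨hx3, _⟩
        have hcast : ((m:ℝ)+1) ≤ (n:ℝ) := by exact_mod_cast h
        nlinarith [Real.pi_pos]
      intro m n hmn
      rcases lt_or_gt_of_ne hmn with h | h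
      · exact key m n h
      · exact (key n m h).symm
    have hIU : IntegrableOn (f β) (⋃ n, s n) := hUnion ▸ hInt β hβ
    have hiU := MeasureTheory.integral_iUnion (fun n => measurableSet_Ioc) hdisj hIU
    rw [hUnion] at hiU
    rw [hiU]
    have hterm : ∀ n : ℕ, (∫ α in s n, f β α) = (Real.exp (-(β*π)))^n * J β := by
      intro n
      have h1 : ((n:ℝ)*π) ≤ ((n:ℝ)+1)*π := by nlinarith [Real.pi_pos]
      have h2 : ∫ x in (0:ℝ)..π, f β (x + (n:ℝ)*π)
          = ∫ x in ((0:ℝ)+(n:ℝ)*π)..(π+(n:ℝ)*π), f β x :=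
        intervalIntegral.integral_comp_add_right (f β) ((n:ℝ)*π)
      rw [show ((0:ℝ)+(n:ℝ)*π) = (n:ℝ)*π by ring,
          show (π+(n:ℝ)*π) = ((n:ℝ)+1)*π by ring] at h2
      have h3 : ∀ x, f β (x + (n:ℝ)*π) = Real.exp (-(β*π))^n * f β x := by
        intro x
        simp only [hf]
        rw [v_add_nat_pi hb u x n, d1_add_nat_pi,
          show -(β * (v b u x + n*π)) = -(β * v b u x) + (n:ℝ) * (-(β*π)) by push_cast; ring,
          Real.exp_add, Real.exp_nat_mul]
        ring
      calc (∫ α in s n, f β α) = ∫ x in ((n:ℝ)*π)..(((n:ℝ)+1)*π), f β x := by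
            rw [hs]; exact (intervalIntegral.integral_of_le h1).symm
        _ = ∫ x in (0:ℝ)..π, f β (x + (n:ℝ)*π) := h2.symm
        _ = ∫ x in (0:ℝ)..π, Real.exp (-(β*π))^n * f β x :=
            intervalIntegral.integral_congr (fun x _ => h3 x)
        _ = Real.exp (-(β*π))^n * ∫ x in (0:ℝ)..π, f β x :=
            intervalIntegral.integral_const_mul _ _
        _ = Real.exp (-(β*π))^n * J β := by
            rw [hJ]; congr 1; exact intervalIntegral.integral_of_le Real.pi_pos.le
    calc (∑' n, ∫ α in s n, f β α) = ∑' n : ℕ, Real.exp (-(β*π))^n * J β := tsum_congr hterm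
      _ = (∑' n : ℕ, Real.exp (-(β*π))^n) * J β := tsum_mul_right
      _ = (1 - Real.exp (-(β*π)))⁻¹ * J β := by
          rw [tsum_geometric_of_lt_one (Real.exp_nonneg _)
            (by rw [Real.exp_lt_one_iff]; nlinarith [Real.pi_pos])]
  -- limit of J
  have hJlim : Tendsto J (nhdsWithin 0 (Set.Ioi 0)) (nhds (∫ α in Set.Ioc (0:ℝ) π, 1 / d1 b α)) := by
    apply tendsto_integral_filter_of_dominated_convergence (bound := fun _ => b)
    · exact Filter.Eventually.of_forall fun β => (cont_f β).aestronglyMeasurable.restrict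
    · refine Filter.Eventually.mono self_mem_nhdsWithin fun β hβ => ?_
      refine (ae_restrict_iff' measurableSet_Ioc).mpr (ae_of_all _ fun α hα => ?_)
      have hβ' : 0 < β := hβ
      have h1 : Real.exp (-(β * v b u α)) ≤ 1 := by
        rw [Real.exp_le_one_iff]
        have hv := v_lb hb hu (le_of_lt hα.1)
        have : 0 ≤ α / b := div_nonneg (le_of_lt hα.1) hbp.le
        nlinarith
      calc ‖f β α‖ = Real.exp (-(β * v b u α)) * |1 / d1 b α| := hfe β α
        _ ≤ 1 * b := mul_le_mul h1 (habs α) (abs_nonneg _) one_pos.le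
        _ = b := one_mul b
    · exact integrableOn_const measure_Ioc_lt_top.ne
    · refine ae_of_all _ fun α => ?_
      have hc : Continuous (fun β : ℝ => Real.exp (-(β * v b u α)) / d1 b α) := by
        exact (Real.continuous_exp.comp (by fun_prop)).div_const _
      have := hc.tendsto 0
      simp only [zero_mul, neg_zero, Real.exp_zero] at this
      exact this.mono_left nhdsWithin_le_nhds
  -- limit of β/(1 - e^{-βπ})
  have hblim : Tendsto (fun β : ℝ => β * (1 - Real.exp (-(β*π)))⁻¹)
      (nhdsWithin 0 (Set.Ioi 0)) (nhds π⁻¹) := by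
    have hF : HasDerivAt (fun x : ℝ => 1 - Real.exp (-(x*π))) π 0 := by
      have h1 : HasDerivAt (fun x : ℝ => -(x*π)) (-π) 0 := by
        exact (((hasDerivAt_id (0:ℝ)).mul_const π).neg).congr_deriv (by simp)
      have h2 := h1.exp
      have h3 := (hasDerivAt_const (0:ℝ) (1:ℝ)).sub h2
      exact h3.congr_deriv (by simp)
    have hslope := hasDerivAt_iff_tendsto_slope.mp hF
    have h4 : Tendsto (fun β : ℝ => (1 - Real.exp (-(β*π))) / β)
        (nhdsWithin 0 (Set.Ioi 0)) (nhds π) := by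
      refine ((hslope.mono_left (nhdsWithin_mono _ fun x hx => ?_))).congr fun β => ?_
      · exact ne_of_gt hx
      · simp [slope_def_field]
    have h5 := h4.inv₀ Real.pi_ne_zero
    exact h5.congr fun β => by rw [inv_div, div_eq_mul_inv]
  -- combine
  have hmain : Tendsto (fun β : ℝ => (1-u) * ((β * (1 - Real.exp (-(β*π)))⁻¹) * J β))
      (nhdsWithin 0 (Set.Ioi 0))
      (nhds ((1-u) * (π⁻¹ * ∫ α in Set.Ioc (0:ℝ) π, 1 / d1 b α))) :=
    tendsto_const_nhds.mul (hblim.mul hJlim)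
  have hval : (1-u) * (π⁻¹ * ∫ α in Set.Ioc (0:ℝ) π, 1 / d1 b α)
      = (1 - u) / π * ∫ α in (0:ℝ)..π, 1 / d1 b α := by
    rw [intervalIntegral.integral_of_le Real.pi_pos.le]; ring
  rw [hval] at hmain
  refine hmain.congr' ?_
  refine Filter.Eventually.mono self_mem_nhdsWithin fun β hβ => ?_
  have hβ' : (0:ℝ) < β := hβ
  show (1-u) * (β * (1 - Real.exp (-(β*π)))⁻¹ * J β) = β * (1-u) * ∫ α in Set.Ioi (0:ℝ), f β α
  rw [hsplit β hβ']
  ring
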